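/- arXiv:1610.06427 — 2 statements merged into one kernel-verified Lean document; each statement's English description precedes it below -/
import Mathlib

section
/- Let C be a v×v real symmetric positive semidefinite matrix, let Q be a v×s real matrix whose column space is contained in the column space of C, let d be the rank of Q, and let K be a v×d real matrix of rank d with K Kᵀ = Q Qᵀ. Then the s×s matrix N = (Qᵀ C⁺ Q)⁺ and the d×d matrix M = (Kᵀ C⁺ K)^{−1} have the same nonzero eigenvalues including multiplicities; that is, for every real λ ≠ 0, the dimension of the kernel of N − λ·I_s equals the dimension of the kernel of M − λ·I_d. -/
/-!
Since `K` has full column rank and `K Kᵀ = Q Qᵀ`, the two matrices have the same column space and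
`Q = K X` with `X = (Kᵀ K)⁻¹ Kᵀ Q`, which satisfies `X Xᵀ = 1`. Then `Qᵀ C⁺ Q = Xᵀ A X` for
`A = Kᵀ C⁺ K`; this `A` is invertible because `C⁺` is positive semidefinite and `C C⁺ K = K`.
Uniqueness of the Moore–Penrose inverse gives `N = Xᵀ A⁻¹ X = Xᵀ (A⁻¹ X)`, while
`A⁻¹ = (A⁻¹ X) Xᵀ`. Finally, for any `P`, `R` and `μ ≠ 0`, the map `x ↦ R x` embeds the
`μ`-eigenspace of `P R` into that of `R P`, so these eigenspaces have the same dimension.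
-/

open Matrix

/-- The column space of a real matrix. -/
def colSpace {m n : ℕ} (A : Matrix (Fin m) (Fin n) ℝ) : Submodule ℝ (Fin m → ℝ) :=
  LinearMap.range A.mulVecLin

/-- `B` is the Moore–Penrose pseudoinverse of `A`. -/
def IsMPInv {m n : ℕ} (A : Matrix (Fin m) (Fin n) ℝ) (B : Matrix (Fin n) (Fin m) ℝ) : Prop :=
  A * B * A = A ∧ B * A * B = B ∧ (A * B)ᵀ = A * B ∧ (B * A)ᵀ = B * A

section IsMPInv

variable {m n : ℕ} {A : Matrix (Fin m) (Fin n) ℝ} {B : Matrix (Fin n) (Fin m) ℝ}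

theorem IsMPInv.unique {B' : Matrix (Fin n) (Fin m) ℝ} (h : IsMPInv A B) (h' : IsMPInv A B') :
    B = B' := by
  obtain ⟨a, b, c, d⟩ := h
  obtain ⟨a', b', c', d'⟩ := h'
  have hAB : A * B = A * B' :=
    calc A * B = (A * B' * (A * B))ᵀ := by rw [← Matrix.mul_assoc, a', c]
      _ = A * B * (A * B') := by rw [transpose_mul, c, c']
      _ = A * B' := by rw [← Matrix.mul_assoc, a]
  have hBA : B * A = B' * A :=
    calc B * A = (B * A * (B' * A))ᵀ := by
          rw [Matrix.mul_assoc B, ← Matrix.mul_assoc A B' A, a', d]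
      _ = B' * A * (B * A) := by rw [transpose_mul, d, d']
      _ = B' * A := by rw [Matrix.mul_assoc B', ← Matrix.mul_assoc A B A, a]
  calc B = B' * A * B := by rw [← hBA, b]
    _ = B' * A * B' := by rw [Matrix.mul_assoc, hAB, ← Matrix.mul_assoc]
    _ = B' := b'

theorem IsMPInv.transpose (h : IsMPInv A B) : IsMPInv Aᵀ Bᵀ := by
  obtain ⟨a, b, c, d⟩ := h
  refine ⟨?_, ?_, ?_, ?_⟩ <;> simp only [← transpose_mul, transpose_transpose]
  · rw [← Matrix.mul_assoc, a]
  · rw [← Matrix.mul_assoc, b]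
  · rw [d]
  · rw [c]

end IsMPInv

theorem IsMPInv.posSemidef {n : ℕ} {A B : Matrix (Fin n) (Fin n) ℝ} (h : IsMPInv A B)
    (hA : A.PosSemidef) : B.PosSemidef := by
  have hAt : Aᵀ = A := by simpa using hA.isHermitian.eq
  have hBt : Bᵀ = B := (hAt ▸ h.transpose).unique h
  simpa [hBt, h.2.1] using hA.conjTranspose_mul_mul_same B

theorem mul_eq_of_colSpace_le {m n k : ℕ} {P : Matrix (Fin m) (Fin m) ℝ}
    {A : Matrix (Fin m) (Fin n) ℝ} {B : Matrix (Fin m) (Fin k) ℝ} (hPA : P * A = A)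
    (hBA : colSpace B ≤ colSpace A) : P * B = B := by
  refine mulVec_injective (funext fun x => ?_)
  obtain ⟨y, hy⟩ := hBA (LinearMap.mem_range_self B.mulVecLin x)
  simp only [mulVecLin_apply] at hy
  rw [← mulVec_mulVec, ← hy, mulVec_mulVec, hPA]

theorem colSpace_mul_transpose_self {m n : ℕ} (A : Matrix (Fin m) (Fin n) ℝ) :
    colSpace (A * Aᵀ) = colSpace A :=
  Submodule.eq_of_le_of_finrank_eq
    (by simpa only [colSpace, mulVecLin_mul] using LinearMap.range_comp_le_range _ _)
    (rank_self_mul_transpose A)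

theorem colSpace_eq_of_mul_transpose_eq {m n k : ℕ} {A : Matrix (Fin m) (Fin n) ℝ}
    {B : Matrix (Fin m) (Fin k) ℝ} (h : A * Aᵀ = B * Bᵀ) : colSpace A = colSpace B := by
  rw [← colSpace_mul_transpose_self A, h, colSpace_mul_transpose_self]

theorem mulVec_injective_of_rank_eq {m n : ℕ} {A : Matrix (Fin m) (Fin n) ℝ} (h : A.rank = n) :
    Function.Injective A.mulVec := by
  have hker := LinearMap.finrank_range_add_finrank_ker A.mulVecLin
  rw [Module.finrank_fin_fun, ← rank, h, add_eq_left, Submodule.finrank_eq_zero] at hker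
  exact LinearMap.ker_eq_bot.mp hker

theorem Matrix.PosSemidef.isUnit_transpose_mul_mul {m n : Type*} [Fintype m] [Fintype n]
    [DecidableEq n] {P : Matrix m m ℝ} (hP : P.PosSemidef) {K : Matrix m n ℝ}
    (hPK : Function.Injective (P * K).mulVec) : IsUnit (Kᵀ * P * K) := by
  refine mulVec_injective_iff_isUnit.mp ((injective_iff_map_eq_zero' (Kᵀ * P * K).mulVecLin).mpr
    fun x => ⟨fun hx => ?_, fun hx => by simp [hx]⟩)
  have hquad : (K *ᵥ x) ⬝ᵥ (P *ᵥ (K *ᵥ x)) = 0 := by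
    rw [mulVecLin_apply, ← mulVec_mulVec, ← mulVec_mulVec] at hx
    calc (K *ᵥ x) ⬝ᵥ (P *ᵥ (K *ᵥ x)) = x ⬝ᵥ (Kᵀ *ᵥ (P *ᵥ (K *ᵥ x))) := by
          rw [dotProduct_mulVec x, vecMul_transpose]
      _ = 0 := by rw [hx, dotProduct_zero]
  have hPKx : (P * K) *ᵥ x = 0 := by
    rw [← mulVec_mulVec]
    simpa using (hP.dotProduct_mulVec_zero_iff (K *ᵥ x)).mp (by simpa using hquad)
  exact hPK (hPKx.trans (mulVec_zero _).symm)

theorem exists_mul_eq_and_mul_transpose_eq_one {v d s : ℕ} {K : Matrix (Fin v) (Fin d) ℝ}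
    {Q : Matrix (Fin v) (Fin s) ℝ} (hK : Function.Injective K.mulVec) (hKQ : K * Kᵀ = Q * Qᵀ) :
    ∃ X : Matrix (Fin d) (Fin s) ℝ, K * X = Q ∧ X * Xᵀ = 1 := by
  have hG : IsUnit (Kᵀ * K).det := (isUnit_iff_isUnit_det _).mp <| by
    simpa using PosSemidef.one.isUnit_transpose_mul_mul (by simpa using hK)
  refine ⟨(Kᵀ * K)⁻¹ * Kᵀ * Q, ?_, ?_⟩
  · have hP : K * (Kᵀ * K)⁻¹ * Kᵀ * K = K := by
      rw [Matrix.mul_assoc _ Kᵀ, Matrix.mul_assoc K, nonsing_inv_mul _ hG, Matrix.mul_one]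
    simpa only [Matrix.mul_assoc] using
      mul_eq_of_colSpace_le hP (colSpace_eq_of_mul_transpose_eq hKQ).ge
  · calc (Kᵀ * K)⁻¹ * Kᵀ * Q * ((Kᵀ * K)⁻¹ * Kᵀ * Q)ᵀ
        = (Kᵀ * K)⁻¹ * (Kᵀ * (Q * Qᵀ) * K) * (Kᵀ * K)⁻¹ := by
          simp [transpose_nonsing_inv, Matrix.mul_assoc]
      _ = ((Kᵀ * K)⁻¹ * (Kᵀ * K)) * ((Kᵀ * K) * (Kᵀ * K)⁻¹) := by
          rw [← hKQ]; simp only [Matrix.mul_assoc]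
      _ = 1 := by rw [nonsing_inv_mul _ hG, mul_nonsing_inv _ hG, Matrix.one_mul]

theorem isMPInv_transpose_mul_mul {d s : ℕ} {X : Matrix (Fin d) (Fin s) ℝ} (hX : X * Xᵀ = 1)
    {A : Matrix (Fin d) (Fin d) ℝ} (hA : IsUnit A.det) :
    IsMPInv (Xᵀ * A * X) (Xᵀ * A⁻¹ * X) := by
  have hmul : ∀ B C : Matrix (Fin d) (Fin d) ℝ, Xᵀ * B * X * (Xᵀ * C * X) = Xᵀ * (B * C) * X := by
    intro B C
    simp only [Matrix.mul_assoc]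
    rw [← Matrix.mul_assoc X Xᵀ, hX, Matrix.one_mul]
  refine ⟨?_, ?_, ?_, ?_⟩
  · rw [hmul, hmul, mul_nonsing_inv _ hA, Matrix.one_mul]
  · rw [hmul, hmul, nonsing_inv_mul _ hA, Matrix.one_mul]
  · simp [hmul, mul_nonsing_inv _ hA]
  · simp [hmul, nonsing_inv_mul _ hA]

section Eigenspace

variable {𝕜 m n : Type*} [Field 𝕜] [Fintype m] [Fintype n] [DecidableEq m] [DecidableEq n]

theorem mem_ker_mulVecLin_sub_smul_one_iff {M : Matrix n n 𝕜} {μ : 𝕜} {x : n → 𝕜} :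
    x ∈ LinearMap.ker (M - μ • 1).mulVecLin ↔ M *ᵥ x = μ • x := by
  rw [LinearMap.mem_ker, mulVecLin_apply, sub_mulVec, sub_eq_zero, smul_mulVec, one_mulVec]

theorem finrank_ker_mul_sub_smul_one_le (A : Matrix m n 𝕜) (B : Matrix n m 𝕜) {μ : 𝕜}
    (hμ : μ ≠ 0) :
    Module.finrank 𝕜 (LinearMap.ker (A * B - μ • 1).mulVecLin) ≤
      Module.finrank 𝕜 (LinearMap.ker (B * A - μ • 1).mulVecLin) := by
  refine LinearMap.finrank_le_finrank_of_injective
    (f := B.mulVecLin.restrict fun x hx => ?_) ?_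
  · rw [mem_ker_mulVecLin_sub_smul_one_iff] at hx ⊢
    calc (B * A) *ᵥ (B.mulVecLin x) = B *ᵥ ((A * B) *ᵥ x) := by
          simp only [mulVecLin_apply, mulVec_mulVec, Matrix.mul_assoc]
      _ = μ • B.mulVecLin x := by rw [hx, mulVec_smul, mulVecLin_apply]
  · refine (injective_iff_map_eq_zero _).mpr fun ⟨x, hx⟩ hBx => Subtype.ext ?_
    replace hBx : B *ᵥ x = 0 := congrArg Subtype.val hBx
    rw [mem_ker_mulVecLin_sub_smul_one_iff, ← mulVec_mulVec, hBx, mulVec_zero] at hx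
    exact (smul_eq_zero.mp hx.symm).resolve_left hμ

theorem finrank_ker_mul_sub_smul_one_comm (A : Matrix m n 𝕜) (B : Matrix n m 𝕜) {μ : 𝕜}
    (hμ : μ ≠ 0) :
    Module.finrank 𝕜 (LinearMap.ker (A * B - μ • 1).mulVecLin) =
      Module.finrank 𝕜 (LinearMap.ker (B * A - μ • 1).mulVecLin) :=
  (finrank_ker_mul_sub_smul_one_le A B hμ).antisymm (finrank_ker_mul_sub_smul_one_le B A hμ)

end Eigenspace

theorem stmt5_general (v s d : ℕ) (C : Matrix (Fin v) (Fin v) ℝ) (hC : C.PosSemidef)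
    (Q : Matrix (Fin v) (Fin s) ℝ) (hQcol : colSpace Q ≤ colSpace C)
    (K : Matrix (Fin v) (Fin d) ℝ) (hKrank : K.rank = d) (hKW : K * Kᵀ = Q * Qᵀ)
    (Cp : Matrix (Fin v) (Fin v) ℝ) (hCp : IsMPInv C Cp)
    (N : Matrix (Fin s) (Fin s) ℝ) (hN : IsMPInv (Qᵀ * Cp * Q) N) :
    ∀ μ : ℝ, μ ≠ 0 →
      Module.finrank ℝ (LinearMap.ker ((N - μ • 1).mulVecLin)) =
        Module.finrank ℝ (LinearMap.ker (((Kᵀ * Cp * K)⁻¹ - μ • 1).mulVecLin)) := by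
  intro μ hμ
  have hK : Function.Injective K.mulVec := mulVec_injective_of_rank_eq hKrank
  have hCK : C * Cp * K = K :=
    mul_eq_of_colSpace_le hCp.1 ((colSpace_eq_of_mul_transpose_eq hKW).trans_le hQcol)
  have hCpK : Function.Injective (Cp * K).mulVec := by
    refine Function.Injective.of_comp (f := C.mulVec) ?_
    simpa only [Function.comp_def, mulVec_mulVec, ← Matrix.mul_assoc, hCK] using hK
  have hA : IsUnit (Kᵀ * Cp * K).det :=
    (isUnit_iff_isUnit_det _).mp ((hCp.posSemidef hC).isUnit_transpose_mul_mul hCpK)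
  obtain ⟨X, rfl, hX⟩ := exists_mul_eq_and_mul_transpose_eq_one hK hKW
  have hNX : N = Xᵀ * ((Kᵀ * Cp * K)⁻¹ * X) := by
    refine hN.unique ?_
    simpa only [transpose_mul, Matrix.mul_assoc] using isMPInv_transpose_mul_mul hX hA
  rw [hNX, finrank_ker_mul_sub_smul_one_comm _ _ hμ, Matrix.mul_assoc, hX, Matrix.mul_one]

theorem stmt5 (v s d : ℕ) (C : Matrix (Fin v) (Fin v) ℝ) (hC : C.PosSemidef)
    (Q : Matrix (Fin v) (Fin s) ℝ) (hQcol : colSpace Q ≤ colSpace C) (hQrank : Q.rank = d)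
    (K : Matrix (Fin v) (Fin d) ℝ) (hKrank : K.rank = d) (hKW : K * Kᵀ = Q * Qᵀ)
    (Cp : Matrix (Fin v) (Fin v) ℝ) (hCp : IsMPInv C Cp)
    (N : Matrix (Fin s) (Fin s) ℝ) (hN : IsMPInv (Qᵀ * Cp * Q) N) :
    ∀ μ : ℝ, μ ≠ 0 →
      Module.finrank ℝ (LinearMap.ker ((N - μ • 1).mulVecLin)) =
        Module.finrank ℝ (LinearMap.ker (((Kᵀ * Cp * K)⁻¹ - μ • 1).mulVecLin)) :=
  stmt5_general v s d C hC Q hQcol K hKrank hKW Cp hCp N hN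
end

section
/- Let C be a v×v real symmetric positive semidefinite matrix, let W be a v×v real symmetric positive semidefinite matrix of rank d whose column space is contained in the column space of C, and let K be a v×d real matrix of rank d with K Kᵀ = W. Then the largest weighted variance over all estimable functions weighted by W equals the reciprocal of the smallest eigenvalue of the weighted information matrix: sup over nonzero q in the column space of W of (qᵀ W⁺ q)^{−1} · (qᵀ C⁺ q) equals λ_min((Kᵀ C⁺ K)^{−1})^{−1} = λ_max(Kᵀ C⁺ K), and this supremum is attained. -/
open Matrix

/-!
Writing `q = K z` identifies the nonzero vectors of `C(W)` with the nonzero `z ∈ ℝᵈ`, and since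
`Kᵀ W⁺ K = 1` the weighted variance of `q` is the Rayleigh quotient of `M = Kᵀ C⁺ K` at `z`.
Its maximum is `λ_max(M)`, attained at a top eigenvector, and `λ_min(M⁻¹) = λ_max(M)⁻¹` because
the spectrum of `M⁻¹` is the pointwise inverse of that of `M`. `M` is positive definite because
`C⁺` is positive semidefinite and kills no nonzero vector of `C(C) ⊇ C(W)`.
-/

open scoped MatrixOrder in
lemma Matrix.IsHermitian.dotProduct_mulVec_le_iSup_eigenvalues_mul {n : Type*} [Fintype n]
    [DecidableEq n] {A : Matrix n n ℝ} (hA : A.IsHermitian) (z : n → ℝ) :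
    z ⬝ᵥ A *ᵥ z ≤ (⨆ i, hA.eigenvalues i) * (z ⬝ᵥ z) := by
  have hle : A ≤ algebraMap ℝ _ (⨆ i, hA.eigenvalues i) := by
    refine le_algebraMap_of_spectrum_le (fun x hx => ?_) hA.isSelfAdjoint
    rw [hA.spectrum_real_eq_range_eigenvalues] at hx
    obtain ⟨i, rfl⟩ := hx
    exact le_ciSup (Set.finite_range _).bddAbove i
  have := (le_iff.mp hle).dotProduct_mulVec_nonneg z
  rw [Algebra.algebraMap_eq_smul_one, star_trivial, sub_mulVec, smul_mulVec, one_mulVec,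
    dotProduct_sub, dotProduct_smul, smul_eq_mul] at this
  linarith

lemma Matrix.IsHermitian.isGreatest_rayleigh {n : Type*} [Fintype n] [DecidableEq n]
    [Nonempty n] {A : Matrix n n ℝ} (hA : A.IsHermitian) :
    IsGreatest {x | ∃ z : n → ℝ, z ≠ 0 ∧ x = (z ⬝ᵥ z)⁻¹ * (z ⬝ᵥ A *ᵥ z)}
      (⨆ i, hA.eigenvalues i) := by
  constructor
  · obtain ⟨j, hj⟩ := exists_eq_ciSup_of_finite (f := hA.eigenvalues)
    set w : n → ℝ := ⇑(hA.eigenvectorBasis j)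
    have hw : w ≠ 0 := fun h =>
      hA.eigenvectorBasis.orthonormal.ne_zero j (by ext k; exact congrFun h k)
    have hww : 0 < w ⬝ᵥ w := by simpa using dotProduct_star_self_pos_iff.mpr hw
    refine ⟨w, hw, ?_⟩
    rw [hA.mulVec_eigenvectorBasis j, dotProduct_smul, smul_eq_mul, ← hj,
      mul_comm (hA.eigenvalues j), inv_mul_cancel_left₀ hww.ne']
  · rintro x ⟨z, hz, rfl⟩
    have hzz : 0 < z ⬝ᵥ z := by simpa using dotProduct_star_self_pos_iff.mpr hz
    rw [inv_mul_le_iff₀ hzz, mul_comm]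
    exact hA.dotProduct_mulVec_le_iSup_eigenvalues_mul z

open scoped ComplexOrder in
lemma Matrix.PosDef.iInf_eigenvalues_inv {𝕜 n : Type*} [RCLike 𝕜] [Fintype n] [DecidableEq n]
    [Nonempty n] {A : Matrix n n 𝕜} (hA : A.PosDef) :
    ⨅ i, hA.1.inv.eigenvalues i = (⨆ i, hA.1.eigenvalues i)⁻¹ := by
  have hrange : Set.range hA.1.inv.eigenvalues = (Set.range hA.1.eigenvalues)⁻¹ := by
    rw [← hA.1.spectrum_real_eq_range_eigenvalues, ← hA.1.inv.spectrum_real_eq_range_eigenvalues,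
      ← hA.isUnit.unit_spec, spectrum.map_inv, coe_units_inv]
  obtain ⟨j, hj⟩ := exists_eq_ciSup_of_finite (f := hA.1.eigenvalues)
  refine IsLeast.csInf_eq ⟨?_, ?_⟩
  · rw [hrange, ← hj]
    exact ⟨j, (inv_inv _).symm⟩
  · rintro y hy
    rw [hrange] at hy
    obtain ⟨i, hi⟩ := hy
    rw [← hj, ← inv_inv y, ← hi]
    exact inv_anti₀ (hA.eigenvalues_pos i) (hj ▸ le_ciSup (Set.finite_range _).bddAbove i)

lemma Matrix.exists_mul_eq_one_of_rank_eq {R m n : Type*} [Field R] [Fintype m] [Fintype n]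
    [DecidableEq m] [DecidableEq n] {A : Matrix m n R} (hA : A.rank = Fintype.card n) :
    ∃ L : Matrix n m R, L * A = 1 := by
  have hker : LinearMap.ker A.mulVecLin = ⊥ := by
    have h := LinearMap.finrank_range_add_finrank_ker A.mulVecLin
    rw [← rank, hA, Module.finrank_fintype_fun_eq_card, add_eq_left] at h
    exact Submodule.finrank_eq_zero.mp h
  obtain ⟨g, hg⟩ := LinearMap.exists_leftInverse_of_injective _ hker
  refine ⟨LinearMap.toMatrix' g, ?_⟩
  rw [← LinearMap.toMatrix'_toLin' A, ← LinearMap.toMatrix'_comp, Matrix.toLin'_apply', hg,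
    LinearMap.toMatrix'_id]

lemma Matrix.mulVec_ne_zero_of_mul_eq_one {R m n : Type*} [CommSemiring R] [Fintype m]
    [Fintype n] [DecidableEq n] {K : Matrix m n R} {L : Matrix n m R} (hL : L * K = 1)
    {z : n → R} (hz : z ≠ 0) : K *ᵥ z ≠ 0 := fun h =>
  hz (by rw [← one_mulVec z, ← hL, ← mulVec_mulVec, h, mulVec_zero])

lemma Matrix.mulVec_dotProduct_mulVec_mulVec {R m n : Type*} [CommSemiring R] [Fintype m]
    [Fintype n] (K : Matrix m n R) (B : Matrix m m R) (z : n → R) :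
    (K *ᵥ z) ⬝ᵥ B *ᵥ K *ᵥ z = z ⬝ᵥ (Kᵀ * B * K) *ᵥ z := by
  rw [← mulVec_mulVec, ← mulVec_mulVec, dotProduct_mulVec z, vecMul_transpose]

lemma colSpace_mul_transpose_eq {m n : ℕ} {K : Matrix (Fin m) (Fin n) ℝ}
    {L : Matrix (Fin n) (Fin m) ℝ} (hL : L * K = 1) : colSpace (K * Kᵀ) = colSpace K := by
  apply le_antisymm
  · rintro _ ⟨y, rfl⟩
    exact ⟨Kᵀ *ᵥ y, by rw [mulVecLin_apply, mulVecLin_apply, mulVec_mulVec]⟩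
  · rintro _ ⟨z, rfl⟩
    refine ⟨Lᵀ *ᵥ z, ?_⟩
    rw [mulVecLin_apply, mulVecLin_apply, mulVec_mulVec, Matrix.mul_assoc, ← transpose_mul, hL,
      transpose_one, Matrix.mul_one]

namespace IsMPInv

section Rectangular

variable {m n : ℕ} {A : Matrix (Fin m) (Fin n) ℝ} {B B' : Matrix (Fin n) (Fin m) ℝ}

lemma unique_s8 (hB : IsMPInv A B) (hB' : IsMPInv A B') : B = B' := by
  obtain ⟨h1, h2, h3, h4⟩ := hB
  obtain ⟨h1', h2', h3', h4'⟩ := hB'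
  have hAB : A * B = A * B' :=
    calc A * B = (A * B' * A * B)ᵀ := by rw [h1', h3]
      _ = (A * B) * (A * B') := by
        rw [Matrix.mul_assoc (A * B'), transpose_mul, h3, h3']
      _ = A * B' := by rw [← Matrix.mul_assoc, h1]
  have hBA : B * A = B' * A :=
    calc B * A = (B * (A * B' * A))ᵀ := by rw [h1', h4]
      _ = (B' * A) * (B * A) := by
        rw [← Matrix.mul_assoc, ← Matrix.mul_assoc, Matrix.mul_assoc (B * A), transpose_mul, h4,
          h4']
      _ = B' * A := by rw [Matrix.mul_assoc, ← Matrix.mul_assoc A, h1]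
  calc B = B * A * B := h2.symm
    _ = B' * (A * B') := by rw [hBA, Matrix.mul_assoc, hAB]
    _ = B' := by rw [← Matrix.mul_assoc, h2']

lemma transpose_s8 (hB : IsMPInv A B) : IsMPInv Aᵀ Bᵀ := by
  obtain ⟨h1, h2, h3, h4⟩ := hB
  refine ⟨?_, ?_, ?_, ?_⟩
  · rw [← transpose_mul, ← transpose_mul, ← Matrix.mul_assoc, h1]
  · rw [← transpose_mul, ← transpose_mul, ← Matrix.mul_assoc, h2]
  · rw [← transpose_mul, transpose_transpose, h4]
  · rw [← transpose_mul, transpose_transpose, h3]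

end Rectangular

section Square

variable {n : ℕ} {A B : Matrix (Fin n) (Fin n) ℝ}

lemma transpose_eq (hB : IsMPInv A B) (hA : Aᵀ = A) : Bᵀ = B :=
  (hA ▸ hB.transpose_s8).unique_s8 hB

lemma transpose_eq_of_posSemidef (hB : IsMPInv A B) (hA : A.PosSemidef) : Bᵀ = B :=
  hB.transpose_eq ((conjTranspose_eq_transpose_of_trivial A).symm.trans hA.1)

lemma posSemidef_s8 (hB : IsMPInv A B) (hA : A.PosSemidef) : B.PosSemidef := by
  simpa [hB.transpose_eq_of_posSemidef hA, hB.2.1] using hA.mul_mul_conjTranspose_same B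

lemma mulVec_mulVec_of_mem_colSpace (hB : IsMPInv A B) {q : Fin n → ℝ} (hq : q ∈ colSpace A) :
    A *ᵥ B *ᵥ q = q := by
  obtain ⟨x, rfl⟩ := hq
  rw [mulVecLin_apply, mulVec_mulVec, mulVec_mulVec, hB.1]

lemma dotProduct_mulVec_pos (hB : IsMPInv A B) (hA : A.PosSemidef) {q : Fin n → ℝ}
    (hq : q ∈ colSpace A) (hq0 : q ≠ 0) : 0 < q ⬝ᵥ B *ᵥ q := by
  have hBpsd := hB.posSemidef_s8 hA
  refine lt_of_le_of_ne (by simpa using hBpsd.dotProduct_mulVec_nonneg q) fun h => hq0 ?_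
  have hBq : B *ᵥ q = 0 := (hBpsd.dotProduct_mulVec_zero_iff q).mp (by simpa using h.symm)
  rw [← hB.mulVec_mulVec_of_mem_colSpace hq, hBq, mulVec_zero]

end Square

end IsMPInv

section FullColumnRank

variable {m n : ℕ} {K : Matrix (Fin m) (Fin n) ℝ} {L : Matrix (Fin n) (Fin m) ℝ}

lemma IsMPInv.transpose_mul_mul_eq_one {Wp : Matrix (Fin m) (Fin m) ℝ}
    (hWp : IsMPInv (K * Kᵀ) Wp) (hL : L * K = 1) : Kᵀ * Wp * K = 1 :=
  calc Kᵀ * Wp * K = (L * K) * (Kᵀ * Wp * K) * (L * K)ᵀ := by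
        rw [hL, transpose_one, Matrix.one_mul, Matrix.mul_one]
    _ = L * (K * Kᵀ * Wp * (K * Kᵀ)) * Lᵀ := by simp only [transpose_mul, Matrix.mul_assoc]
    _ = (L * K) * (L * K)ᵀ := by rw [hWp.1]; simp only [transpose_mul, Matrix.mul_assoc]
    _ = 1 := by rw [hL, transpose_one, Matrix.one_mul]

lemma posDef_transpose_mul_mul {C Cp : Matrix (Fin m) (Fin m) ℝ} (hC : C.PosSemidef)
    (hCp : IsMPInv C Cp) (hL : L * K = 1) (hcol : colSpace K ≤ colSpace C) :
    (Kᵀ * Cp * K).PosDef := by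
  refine PosDef.of_dotProduct_mulVec_pos ?_ fun z hz => ?_
  · simp [IsHermitian, conjTranspose_eq_transpose_of_trivial,
      hCp.transpose_eq_of_posSemidef hC, Matrix.mul_assoc]
  · have := hCp.dotProduct_mulVec_pos hC (hcol ⟨z, rfl⟩) (mulVec_ne_zero_of_mul_eq_one hL hz)
    rwa [mulVecLin_apply, mulVec_dotProduct_mulVec_mulVec, ← star_trivial z] at this

lemma setOf_rayleigh_colSpace_eq {B Wp : Matrix (Fin m) (Fin m) ℝ}
    (hWp : IsMPInv (K * Kᵀ) Wp) (hL : L * K = 1) :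
    {x : ℝ | ∃ q : Fin m → ℝ, q ∈ colSpace (K * Kᵀ) ∧ q ≠ 0 ∧
      x = (q ⬝ᵥ Wp *ᵥ q)⁻¹ * (q ⬝ᵥ B *ᵥ q)} =
    {x : ℝ | ∃ z : Fin n → ℝ, z ≠ 0 ∧ x = (z ⬝ᵥ z)⁻¹ * (z ⬝ᵥ (Kᵀ * B * K) *ᵥ z)} := by
  have hquad (z : Fin n → ℝ) :
      (K *ᵥ z ⬝ᵥ Wp *ᵥ K *ᵥ z)⁻¹ * (K *ᵥ z ⬝ᵥ B *ᵥ K *ᵥ z) =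
        (z ⬝ᵥ z)⁻¹ * (z ⬝ᵥ (Kᵀ * B * K) *ᵥ z) := by
    rw [mulVec_dotProduct_mulVec_mulVec, mulVec_dotProduct_mulVec_mulVec,
      hWp.transpose_mul_mul_eq_one hL, one_mulVec]
  rw [colSpace_mul_transpose_eq hL]
  ext x
  constructor
  · rintro ⟨_, ⟨z, rfl⟩, hq, rfl⟩
    exact ⟨z, fun h => hq (by simp [h]), hquad z⟩
  · rintro ⟨z, hz, rfl⟩
    exact ⟨K *ᵥ z, ⟨z, rfl⟩, mulVec_ne_zero_of_mul_eq_one hL hz, (hquad z).symm⟩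

end FullColumnRank

theorem stmt8_general (v d : ℕ) (hd : 0 < d) (C W : Matrix (Fin v) (Fin v) ℝ)
    (hC : C.PosSemidef) (hcol : colSpace W ≤ colSpace C)
    (K : Matrix (Fin v) (Fin d) ℝ) (hKrank : K.rank = d) (hKW : K * Kᵀ = W)
    (Cp Wp : Matrix (Fin v) (Fin v) ℝ) (hCp : IsMPInv C Cp) (hWp : IsMPInv W Wp) :
    ∃ hPD : (Kᵀ * Cp * K).PosDef,
      ((⨅ i, (Matrix.IsHermitian.inv hPD.1).eigenvalues i)⁻¹ = ⨆ i, hPD.1.eigenvalues i) ∧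
        IsGreatest
          {x : ℝ | ∃ q : Fin v → ℝ, q ∈ colSpace W ∧ q ≠ 0 ∧
            x = (q ⬝ᵥ Wp *ᵥ q)⁻¹ * (q ⬝ᵥ Cp *ᵥ q)}
          (⨆ i, hPD.1.eigenvalues i) := by
  have : Nonempty (Fin d) := Fin.pos_iff_nonempty.mp hd
  obtain ⟨L, hL⟩ := exists_mul_eq_one_of_rank_eq (hKrank.trans (Fintype.card_fin d).symm)
  subst hKW
  have hPD := posDef_transpose_mul_mul hC hCp hL (colSpace_mul_transpose_eq hL ▸ hcol)
  refine ⟨hPD, by rw [hPD.iInf_eigenvalues_inv, inv_inv], ?_⟩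
  rw [setOf_rayleigh_colSpace_eq hWp hL]
  exact hPD.1.isGreatest_rayleigh

theorem stmt8 (v d : ℕ) (hd : 0 < d) (C W : Matrix (Fin v) (Fin v) ℝ)
    (hC : C.PosSemidef) (hW : W.PosSemidef)
    (hWrank : W.rank = d) (hcol : colSpace W ≤ colSpace C)
    (K : Matrix (Fin v) (Fin d) ℝ) (hKrank : K.rank = d) (hKW : K * Kᵀ = W)
    (Cp Wp : Matrix (Fin v) (Fin v) ℝ) (hCp : IsMPInv C Cp) (hWp : IsMPInv W Wp) :
    ∃ hPD : (Kᵀ * Cp * K).PosDef,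
      ((⨅ i, (Matrix.IsHermitian.inv hPD.1).eigenvalues i)⁻¹ = ⨆ i, hPD.1.eigenvalues i) ∧
        IsGreatest
          {x : ℝ | ∃ q : Fin v → ℝ, q ∈ colSpace W ∧ q ≠ 0 ∧
            x = (q ⬝ᵥ Wp *ᵥ q)⁻¹ * (q ⬝ᵥ Cp *ᵥ q)}
          (⨆ i, hPD.1.eigenvalues i) :=
  stmt8_general v d hd C W hC hcol K hKrank hKW Cp Wp hCp hWp
end
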